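/- arXiv:1009.1800 — 2 statements merged into one kernel-verified Lean document; each statement's English description precedes it below -/
import Mathlib

section
/- Let n ≥ 1 and let b_1, …, b_n be nonzero even integers. Write [b_1, …, b_n] = p/q in lowest terms with q > 0. Then q is odd if and only if n is even. (The parity of the denominator of a rational number is opposite to the parity of the length of its even continued fraction expansion.) -/
/-!
Put `r = [b₂, …, bₙ]`, so that `[b₁, …, bₙ] = (b₁ + r)⁻¹`. Adding the even integer `b₁` keeps
the denominator of `r` and changes its numerator by `b₁ · r.den`, an even number, and inverting
swaps numerator and denominator up to sign. So the parities of numerator and denominator swap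
with every new term, starting from `0 = 0/1` for the empty list. The bound `|[b₁, …, bₙ]| < 1`
guarantees that `b₁ + r` is never `0`, so that each inversion is a genuine one.
-/

/-- The continued fraction `[b₁, b₂, …, bₙ] = 1/(b₁ + 1/(b₂ + ⋯ + 1/bₙ))`,
evaluated in `ℚ` (with the convention `cf [] = 0`). -/
def cf : List ℤ → ℚ
  | [] => 0
  | b :: t => 1 / ((b : ℚ) + cf t)

theorem Int.two_le_abs_of_even {x : ℤ} (hx : Even x) (h0 : x ≠ 0) : 2 ≤ |x| := by
  obtain ⟨c, rfl⟩ := hx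
  rcases lt_trichotomy c 0 with hc | rfl | hc
  · rw [abs_of_neg (by omega)]; omega
  · simp at h0
  · rw [abs_of_pos (by omega)]; omega

theorem Rat.intCast_add_num (b : ℤ) (r : ℚ) : ((b : ℚ) + r).num = b * r.den + r.num := by
  have h := Rat.mul_den_eq_num ((b : ℚ) + r)
  rw [Rat.intCast_add_den, add_mul, Rat.mul_den_eq_num] at h
  exact_mod_cast h.symm

theorem Rat.odd_num_inv_iff {s : ℚ} (hs : s ≠ 0) : Odd s⁻¹.num ↔ Odd s.den := by
  rw [← Int.natAbs_odd, Rat.num_inv, Int.natAbs_mul,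
    Int.natAbs_sign_of_ne_zero (Rat.num_ne_zero.mpr hs), one_mul, Int.natAbs_natCast]

theorem Rat.odd_den_inv_intCast_add_iff {b : ℤ} (hb : Even b) {r : ℚ} (hs : (b : ℚ) + r ≠ 0) :
    Odd ((b : ℚ) + r)⁻¹.den ↔ Odd r.num := by
  rw [Rat.den_inv_of_ne_zero hs, Int.natAbs_odd, Rat.intCast_add_num, Int.odd_add']
  simp [hb.mul_right]

theorem abs_cf_lt_one : ∀ {l : List ℤ}, (∀ x ∈ l, 2 ≤ |x|) → |cf l| < 1
  | [], _ => by simp [cf]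
  | b :: t, h => by
    have hb : (2 : ℚ) ≤ |(b : ℚ)| := mod_cast h b List.mem_cons_self
    have ht : |cf t| < 1 := abs_cf_lt_one fun x hx => h x (List.mem_cons_of_mem b hx)
    have hs : 1 < |(b : ℚ) + cf t| := by
      have htri := abs_sub ((b : ℚ) + cf t) (cf t)
      rw [add_sub_cancel_right] at htri
      linarith
    rw [cf, one_div, abs_inv]
    exact inv_lt_one_of_one_lt₀ hs

theorem odd_num_cf_iff_and_odd_den_cf_iff {l : List ℤ} (h : ∀ x ∈ l, x ≠ 0 ∧ Even x) :
    (Odd (cf l).num ↔ Odd l.length) ∧ (Odd (cf l).den ↔ Even l.length) := by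
  induction l with
  | nil => simp [cf]
  | cons b t ih =>
    obtain ⟨hb0, hbe⟩ := h b List.mem_cons_self
    have ht : ∀ x ∈ t, x ≠ 0 ∧ Even x := fun x hx => h x (List.mem_cons_of_mem b hx)
    have hs : (b : ℚ) + cf t ≠ 0 := by
      have hb : (2 : ℚ) ≤ |(b : ℚ)| := mod_cast Int.two_le_abs_of_even hbe hb0
      have hr := abs_cf_lt_one fun x hx => Int.two_le_abs_of_even (ht x hx).2 (ht x hx).1
      intro h0
      rw [eq_neg_of_add_eq_zero_right h0, abs_neg] at hr
      linarith
    obtain ⟨ih_num, ih_den⟩ := ih ht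
    rw [cf, one_div, Rat.odd_num_inv_iff hs, Rat.intCast_add_den,
      Rat.odd_den_inv_intCast_add_iff hbe hs, ih_num, ih_den, List.length_cons,
      Nat.odd_add_one, Nat.even_add_one, Nat.not_odd_iff_even, Nat.not_even_iff_odd]
    exact ⟨Iff.rfl, Iff.rfl⟩

theorem stmt4_general (l : List ℤ)
    (hb : ∀ x ∈ l, x ≠ 0 ∧ Even x) :
    Odd (cf l).den ↔ Even l.length :=
  (odd_num_cf_iff_and_odd_den_cf_iff hb).2

/-- If `b₁, …, bₙ` (`n ≥ 1`) are nonzero even integers and `[b₁, …, bₙ] = p/q`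
in lowest terms with `q > 0`, then `q` is odd if and only if `n` is even. -/
theorem stmt4 (l : List ℤ) (hne : l ≠ [])
    (hb : ∀ x ∈ l, x ≠ 0 ∧ Even x) :
    Odd (cf l).den ↔ Even l.length :=
  stmt4_general l hb
end

section
/- Let n be an odd positive integer and let b_1, …, b_n be nonzero even integers. Write [b_1, …, b_n] = p/q and [b_n, …, b_1] = p̄/q̄, both in lowest terms with q > 0 and q̄ > 0. Then q̄ = q and p·p̄ ≡ 1 (mod 2q). -/
open Matrix

def cfMatrix (x : ℤ) : Matrix (Fin 2) (Fin 2) ℤ := !![x, 1; 1, 0]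

def continuantMatrix (l : List ℤ) : Matrix (Fin 2) (Fin 2) ℤ := (l.map cfMatrix).prod

@[simp]
lemma continuantMatrix_cons (x : ℤ) (l : List ℤ) :
    continuantMatrix (x :: l) = cfMatrix x * continuantMatrix l := rfl

lemma continuantMatrix_cons_zero_zero (x : ℤ) (l : List ℤ) :
    continuantMatrix (x :: l) 0 0 = x * continuantMatrix l 0 0 + continuantMatrix l 1 0 := by
  simp [cfMatrix, mul_apply, Fin.sum_univ_two]

lemma continuantMatrix_cons_one_zero (x : ℤ) (l : List ℤ) :
    continuantMatrix (x :: l) 1 0 = continuantMatrix l 0 0 := by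
  simp [cfMatrix, mul_apply, Fin.sum_univ_two]

lemma transpose_cfMatrix (x : ℤ) : (cfMatrix x)ᵀ = cfMatrix x := by
  ext i j
  fin_cases i <;> fin_cases j <;> rfl

lemma continuantMatrix_reverse (l : List ℤ) :
    continuantMatrix l.reverse = (continuantMatrix l)ᵀ := by
  simp only [continuantMatrix, transpose_list_prod, List.map_map, Function.comp_def,
    transpose_cfMatrix, List.map_reverse]

lemma det_continuantMatrix (l : List ℤ) : (continuantMatrix l).det = (-1) ^ l.length := by
  induction l with
  | nil => simp [continuantMatrix]
  | cons x l ih =>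
    rw [continuantMatrix_cons, det_mul, ih, cfMatrix, det_fin_two_of, List.length_cons, pow_succ']
    ring

lemma mapMatrix_cfMatrix_of_even {x : ℤ} (hx : Even x) :
    (Int.castRingHom (ZMod 2)).mapMatrix (cfMatrix x) = !![0, 1; 1, 0] := by
  have hx2 : (x : ZMod 2) = 0 := ZMod.intCast_eq_zero_iff_even.2 hx
  ext i j
  fin_cases i <;> fin_cases j <;> simp [cfMatrix, hx2]

lemma mapMatrix_continuantMatrix_of_even {l : List ℤ} (h : ∀ x ∈ l, Even x) :
    (Int.castRingHom (ZMod 2)).mapMatrix (continuantMatrix l) = !![0, 1; 1, 0] ^ l.length := by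
  rw [continuantMatrix, map_list_prod, List.map_map,
    List.map_congr_left (f := _ ∘ cfMatrix) (g := fun _ => !![0, 1; 1, 0])
      fun x hx => mapMatrix_cfMatrix_of_even (h x hx),
    List.map_const', List.prod_replicate]

lemma even_continuantMatrix_one_one {l : List ℤ} (h : ∀ x ∈ l, Even x) (hl : Odd l.length) :
    Even (continuantMatrix l 1 1) := by
  obtain ⟨k, hk⟩ := hl
  have hswap : (!![0, 1; 1, 0] : Matrix (Fin 2) (Fin 2) (ZMod 2)) ^ 2 = 1 := by decide
  have h11 := congrFun₂ (mapMatrix_continuantMatrix_of_even h) 1 1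
  rw [hk, pow_succ, pow_mul, hswap, one_pow, one_mul] at h11
  exact ZMod.intCast_eq_zero_iff_even.1 h11

lemma one_lt_abs_intCast_add {x : ℤ} {y : ℚ} (hx : 2 ≤ |x|) (hy : |y| < 1) :
    1 < |(x : ℚ) + y| := by
  have hxq : (2 : ℚ) ≤ |(x : ℚ)| := by exact_mod_cast hx
  have := abs_sub_abs_le_abs_add (x : ℚ) y
  linarith

lemma abs_cf_lt_one_s11 {l : List ℤ} (h : ∀ x ∈ l, 2 ≤ |x|) : |cf l| < 1 := by
  induction l with
  | nil => simp [cf]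
  | cons x l ih =>
    have hgt := one_lt_abs_intCast_add (h x List.mem_cons_self)
      (ih fun y hy => h y (List.mem_cons_of_mem x hy))
    rw [cf, abs_div, abs_one, div_lt_one (by linarith)]
    exact hgt

lemma cf_eq_div {l : List ℤ} (h : ∀ x ∈ l, 2 ≤ |x|) :
    continuantMatrix l 0 0 ≠ 0 ∧
      cf l = (continuantMatrix l 1 0 : ℚ) / continuantMatrix l 0 0 := by
  induction l with
  | nil => simp [cf, continuantMatrix]
  | cons x l ih =>
    have hl : ∀ y ∈ l, 2 ≤ |y| := fun y hy => h y (List.mem_cons_of_mem x hy)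
    obtain ⟨hP, hcf⟩ := ih hl
    have hsum : (x : ℚ) + cf l ≠ 0 := by
      have := one_lt_abs_intCast_add (h x List.mem_cons_self) (abs_cf_lt_one_s11 hl)
      intro h0
      rw [h0, abs_zero] at this
      linarith
    have hP' : (continuantMatrix l 0 0 : ℚ) ≠ 0 := by exact_mod_cast hP
    have hcons :
        (continuantMatrix (x :: l) 0 0 : ℚ) = continuantMatrix l 0 0 * (x + cf l) := by
      rw [continuantMatrix_cons_zero_zero, hcf]
      push_cast
      field_simp
    refine ⟨by exact_mod_cast hcons ▸ mul_ne_zero hP' hsum, ?_⟩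
    rw [cf, hcons, continuantMatrix_cons_one_zero, div_mul_cancel_left₀ hP', one_div]

lemma Rat.num_den_intCast_div_of_isCoprime {a c : ℤ} (ha : a ≠ 0) (h : IsCoprime c a) :
    ((c : ℚ) / a).num = a.sign * c ∧ ((c : ℚ) / a).den = a.natAbs := by
  have hpos : (0 : ℤ) < a.natAbs := by omega
  have hcop : Nat.Coprime (a.sign * c).natAbs (a.natAbs : ℤ).natAbs := by
    rw [Int.natAbs_mul, Int.natAbs_sign_of_ne_zero ha, one_mul, Int.natAbs_natCast]
    exact Int.isCoprime_iff_gcd_eq_one.mp h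
  have hdiv : (c : ℚ) / a = ((a.sign * c : ℤ) : ℚ) / ((a.natAbs : ℤ) : ℚ) := by
    rw [← Int.sign_mul_self a, Int.cast_mul, Int.cast_mul,
      mul_div_mul_left _ _ (by exact_mod_cast mt Int.sign_eq_zero_iff_zero.1 ha)]
  rw [hdiv, Rat.num_div_eq_of_coprime hpos hcop]
  exact ⟨rfl, by exact_mod_cast Rat.den_div_eq_of_coprime hpos hcop⟩

lemma den_eq_and_num_mul_num_modEq {a b c d : ℤ} (ha : a ≠ 0) (hdet : a * d - b * c = -1)
    (hd : Even d) :
    ((b : ℚ) / a).den = ((c : ℚ) / a).den ∧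
      ((c : ℚ) / a).num * ((b : ℚ) / a).num ≡ 1 [ZMOD 2 * ((c : ℚ) / a).den] := by
  obtain ⟨hnum_c, hden_c⟩ :=
    Rat.num_den_intCast_div_of_isCoprime (c := c) ha ⟨b, -d, by linear_combination -hdet⟩
  obtain ⟨hnum_b, hden_b⟩ :=
    Rat.num_den_intCast_div_of_isCoprime (c := b) ha ⟨c, -d, by linear_combination -hdet⟩
  refine ⟨hden_b.trans hden_c.symm, ?_⟩
  have hsign : a.sign * a.sign = 1 :=
    Int.isUnit_mul_self (Int.isUnit_iff_natAbs_eq.2 (Int.natAbs_sign_of_ne_zero ha))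
  obtain ⟨e, rfl⟩ := hd
  have hdiff : 1 - a.sign * c * (a.sign * b) = 2 * (a * -e) := by
    linear_combination (-(b * c)) * hsign + hdet
  rw [hnum_c, hnum_b, hden_c, Int.modEq_iff_dvd, hdiff]
  exact mul_dvd_mul_left 2 (Int.natAbs_dvd.2 (dvd_mul_right a (-e)))

/-- Let `n` be odd, `b₁, …, bₙ` nonzero even integers, and write
`[b₁, …, bₙ] = p/q` and `[bₙ, …, b₁] = p̄/q̄` in lowest terms with positive
denominators. Then `q̄ = q` and `p·p̄ ≡ 1 (mod 2q)`. -/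
theorem stmt11 (l : List ℤ) (hodd : Odd l.length)
    (hb : ∀ x ∈ l, x ≠ 0 ∧ Even x) :
    (cf l.reverse).den = (cf l).den ∧
      (cf l).num * (cf l.reverse).num ≡ 1 [ZMOD (2 * ((cf l).den : ℤ))] := by
  have h2 : ∀ x ∈ l, 2 ≤ |x| := fun x hx =>
    Int.le_of_dvd (abs_pos.2 (hb x hx).1) (even_abs.2 (hb x hx).2).two_dvd
  obtain ⟨hP, hcf⟩ := cf_eq_div h2
  obtain ⟨-, hcf_rev⟩ := cf_eq_div fun x hx => h2 x (List.mem_reverse.1 hx)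
  rw [continuantMatrix_reverse, transpose_apply, transpose_apply] at hcf_rev
  have hdet : continuantMatrix l 0 0 * continuantMatrix l 1 1 -
      continuantMatrix l 0 1 * continuantMatrix l 1 0 = -1 := by
    rw [← det_fin_two, det_continuantMatrix, hodd.neg_one_pow]
  rw [hcf, hcf_rev]
  exact den_eq_and_num_mul_num_modEq hP hdet
    (even_continuantMatrix_one_one (fun x hx => (hb x hx).2) hodd)
end
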